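/- Let H = {1, 8, 43, 64, 79, 188, 228, 242, 279, 310, 339, 344, 512, 562, 587} ⊆ ℤ/631ℤ, and for k ∈ ℤ/631ℤ let H·k = {hk mod 631 : h ∈ H}. Define X = ⋃_{j ∈ J} H·j, Y = ⋃_{k ∈ K} H·k, Z = ⋃_{l ∈ L} H·l, W = ⋃_{m ∈ M} H·m where J = {1, 2, 3, 4, 6, 7, 12, 13, 14, 17, 19, 21, 26, 27, 31, 38, 42, 52, 62, 76, 124}, K = {1, 2, 3, 4, 5, 6, 7, 9, 12, 17, 23, 26, 27, 31, 33, 38, 42, 44, 52, 76, 78, 126}, L = {1, 2, 3, 4, 6, 7, 9, 11, 12, 13, 14, 17, 18, 19, 21, 29, 35, 46, 52, 62, 66, 76}, M = {1, 2, 3, 4, 5, 6, 12, 13, 14, 18, 19, 21, 22, 26, 27, 38, 39, 42, 63, 67, 92, 124}. Then X, Y, Z, W form supplementary difference sets with parameters (631; 315, 330, 330, 330; 674), and X is a skew subset of ℤ/631ℤ. -/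

import Mathlib

/-- `X 1, …, X t ⊆ ℤ/vℤ` are supplementary difference sets with parameters
`(v; k 1, …, k t; lam)`. -/
def IsSDS {v t : ℕ} (X : Fin t → Finset (ZMod v)) (k : Fin t → ℕ) (lam : ℕ) : Prop :=
  (∀ i, (X i).card = k i) ∧
  ∀ c : ZMod v, c ≠ 0 →
    (∑ i, ((X i ×ˢ X i).filter fun p => p.1 - p.2 = c).card) = lam

/-- The set `H = {1, 8, 43, 64, 79, 188, 228, 242, 279, 310, 339, 344, 512, 562, 587}` in `ℤ/631ℤ`. -/
def Hset : Finset (ZMod 631) := {1, 8, 43, 64, 79, 188, 228, 242, 279, 310, 339, 344, 512, 562, 587}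

/-- The orbit `H·k = {h * k : h ∈ H}` of `H` through `k`. -/
def orb (k : ZMod 631) : Finset (ZMod 631) := Hset.image (fun h => h * k)

def Jset : Finset (ZMod 631) := {1, 2, 3, 4, 6, 7, 12, 13, 14, 17, 19, 21, 26, 27, 31, 38, 42, 52, 62, 76, 124}
def Kset : Finset (ZMod 631) := {1, 2, 3, 4, 5, 6, 7, 9, 12, 17, 23, 26, 27, 31, 33, 38, 42, 44, 52, 76, 78, 126}
def Lset : Finset (ZMod 631) := {1, 2, 3, 4, 6, 7, 9, 11, 12, 13, 14, 17, 18, 19, 21, 29, 35, 46, 52, 62, 66, 76}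
def Mset : Finset (ZMod 631) := {1, 2, 3, 4, 5, 6, 12, 13, 14, 18, 19, 21, 22, 26, 27, 38, 39, 42, 63, 67, 92, 124}

/-- `X = ⋃_{j ∈ J} H·j`. -/
def Xset : Finset (ZMod 631) := Jset.biUnion orb
/-- `Y = ⋃_{k ∈ K} H·k`. -/
def Yset : Finset (ZMod 631) := Kset.biUnion orb
/-- `Z = ⋃_{l ∈ L} H·l`. -/
def Zset : Finset (ZMod 631) := Lset.biUnion orb
/-- `W = ⋃_{m ∈ M} H·m`. -/
def Wset : Finset (ZMod 631) := Mset.biUnion orb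

/-! X, Y, Z, W are unions of cosets of the subgroup `H = ⟨8⟩` of order 15 in `(ℤ/631ℤ)ˣ`.
For such a set `S` and `h ∈ H`, multiplication by `h` permutes `S`, so the number of
representations of `c` as a difference in `S`, and the membership of `c` and `-c` in `S`, depend
only on the coset `H c`. Since 3 is a primitive root modulo 631, the powers `3 ^ i` with `i < 42`
represent all 42 cosets, and both claims reduce to a finite check at these representatives. -/

open Finset

def diffCount {G : Type*} [AddGroup G] [DecidableEq G] (S : Finset G) (c : G) : ℕ :=
  ((S ×ˢ S).filter fun p => p.1 - p.2 = c).card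

theorem diffCount_eq_card_filter {G : Type*} [AddGroup G] [Fintype G] [DecidableEq G]
    (S : Finset G) (c : G) : diffCount S c = #{b | b ∈ S ∧ c + b ∈ S} := by
  refine card_nbij' Prod.snd (fun b => (c + b, b)) ?_ ?_ ?_ fun b _ => rfl
  · rintro ⟨a, b⟩ h
    simp only [coe_filter, mem_product, mem_univ, true_and] at h ⊢
    obtain ⟨⟨ha, hb⟩, rfl⟩ := h
    simpa using And.intro hb ha
  · intro b h
    simp_all
  · rintro ⟨a, b⟩ h
    simp only [coe_filter, mem_product] at h
    simp [← h.2]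

section Multiplier

variable {M : Type*} [Monoid M] [DecidableEq M]

theorem image_mul_left_eq_self {S : Finset M} {u : M} (hu : IsUnit u)
    (hS : ∀ a ∈ S, u * a ∈ S) : S.image (u * ·) = S :=
  eq_of_subset_of_card_le (by simpa [image_subset_iff] using hS)
    (card_image_of_injective S hu.mul_right_injective).ge

theorem mul_mem_iff_of_forall_mul_mem {S : Finset M} {u : M} (hu : IsUnit u)
    (hS : ∀ a ∈ S, u * a ∈ S) (a : M) : u * a ∈ S ↔ a ∈ S := by
  conv_lhs => rw [← image_mul_left_eq_self hu hS]
  simp [hu.mul_right_injective.eq_iff]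

theorem mul_mem_biUnion_image_mul {H : Finset M} (hH : ∀ x ∈ H, ∀ y ∈ H, x * y ∈ H)
    (J : Finset M) {u : M} (hu : u ∈ H) :
    ∀ a ∈ J.biUnion (fun j => H.image (· * j)), u * a ∈ J.biUnion (fun j => H.image (· * j)) := by
  simp only [mem_biUnion, mem_image]
  rintro _ ⟨j, hj, h, hh, rfl⟩
  exact ⟨j, hj, u * h, hH u hu h hh, mul_assoc u h j⟩

end Multiplier

theorem diffCount_mul_left {R : Type*} [Ring R] [Fintype R] [DecidableEq R] {S : Finset R} {u : R}
    (hu : IsUnit u) (hS : ∀ a ∈ S, u * a ∈ S) (c : R) :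
    diffCount S (u * c) = diffCount S c := by
  obtain ⟨u, rfl⟩ := hu
  rw [diffCount_eq_card_filter, diffCount_eq_card_filter]
  refine card_equiv (Units.mulLeft u⁻¹) fun b => ?_
  have hmem := mul_mem_iff_of_forall_mul_mem u.isUnit hS
  simp only [mem_filter, mem_univ, true_and, Units.mulLeft_apply]
  rw [← hmem (↑u⁻¹ * b), ← hmem (c + ↑u⁻¹ * b), mul_add, Units.mul_inv_cancel_left]

def bitmask (s : Multiset ℕ) : ℕ := (s.map (2 ^ ·)).fold (· ||| ·) 0

theorem testBit_bitmask (s : Multiset ℕ) (i : ℕ) : (bitmask s).testBit i ↔ i ∈ s := by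
  induction s using Multiset.induction_on with
  | empty =>
    simp only [bitmask, Multiset.map_zero, Multiset.fold_zero, Nat.zero_testBit,
      Bool.false_eq_true, Multiset.notMem_zero]
  | cons a s ih =>
    rw [bitmask, Multiset.map_cons, Multiset.fold_cons_left, Nat.testBit_lor, Nat.testBit_two_pow,
      ← bitmask, Bool.or_eq_true, ih]
    simp [eq_comm]

/-- Built from the underlying multisets, so that the kernel never deduplicates the union. -/
def cosetMask {n : ℕ} (H J : Finset (ZMod n)) : ℕ :=
  bitmask (J.val.bind fun j => H.val.map fun h => (h * j).val)

theorem mem_biUnion_image_mul_iff_testBit {n : ℕ} [NeZero n] (H J : Finset (ZMod n))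
    (a : ZMod n) :
    a ∈ J.biUnion (fun j => H.image (· * j)) ↔ (cosetMask H J).testBit a.val := by
  simp [cosetMask, testBit_bitmask, (ZMod.val_injective n).eq_iff]

section Concrete

set_option maxRecDepth 100000

theorem mul_mem_Hset : ∀ x ∈ Hset, ∀ y ∈ Hset, x * y ∈ Hset := by
  decide +kernel

theorem isUnit_of_mem_Hset {h : ZMod 631} (hh : h ∈ Hset) : IsUnit h := by
  have hpow : ∀ h ∈ Hset, h ^ 15 = 1 := by decide +kernel
  exact IsUnit.of_pow_eq_one (hpow h hh) (by norm_num)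

theorem mul_mem_biUnion_orb (J : Finset (ZMod 631)) {h : ZMod 631} (hh : h ∈ Hset) :
    ∀ a ∈ J.biUnion orb, h * a ∈ J.biUnion orb :=
  mul_mem_biUnion_image_mul mul_mem_Hset J hh

theorem mem_biUnion_orb_iff_testBit (J : Finset (ZMod 631)) (a : ZMod 631) :
    a ∈ J.biUnion orb ↔ (cosetMask Hset J).testBit a.val :=
  mem_biUnion_image_mul_iff_testBit Hset J a

def cosetReps : Finset (ZMod 631) := (range 42).image (3 ^ ·)

theorem mem_biUnion_orb_cosetReps : ∀ c : ZMod 631, c ≠ 0 → c ∈ cosetReps.biUnion orb := by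
  simp only [mem_biUnion_orb_iff_testBit]
  decide +kernel

theorem exists_mul_cosetRep {c : ZMod 631} (hc : c ≠ 0) :
    ∃ r ∈ cosetReps, ∃ h ∈ Hset, h * r = c := by
  simpa [orb] using mem_biUnion_orb_cosetReps c hc

theorem card_biUnion_orb (J : Finset (ZMod 631)) :
    (J.biUnion orb).card = #{a : ZMod 631 | (cosetMask Hset J).testBit a.val} := by
  simp only [← mem_biUnion_orb_iff_testBit, filter_univ_mem]

theorem card_sets : Xset.card = 315 ∧ Yset.card = 330 ∧ Zset.card = 330 ∧ Wset.card = 330 := by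
  simp only [Xset, Yset, Zset, Wset, card_biUnion_orb]
  decide +kernel

theorem sum_diffCount_cosetRep : ∀ r ∈ cosetReps,
    diffCount Xset r + diffCount Yset r + diffCount Zset r + diffCount Wset r = 674 := by
  simp only [diffCount_eq_card_filter, Xset, Yset, Zset, Wset, mem_biUnion_orb_iff_testBit]
  decide +kernel

theorem skew_cosetRep : ∀ r ∈ cosetReps, Xor' (r ∈ Xset) (-r ∈ Xset) := by
  simp only [Xor', Xset, mem_biUnion_orb_iff_testBit]
  decide +kernel

end Concrete

theorem stmt14 :
    IsSDS ![Xset, Yset, Zset, Wset] ![315, 330, 330, 330] 674 ∧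
      ∀ i : ZMod 631, i ≠ 0 → Xor' (i ∈ Xset) (-i ∈ Xset) := by
  refine ⟨⟨fun i => ?_, fun c hc => ?_⟩, fun c hc => ?_⟩
  · fin_cases i <;> simp [card_sets]
  · obtain ⟨r, hr, h, hh, rfl⟩ := exists_mul_cosetRep hc
    have hinv (J : Finset (ZMod 631)) :=
      diffCount_mul_left (isUnit_of_mem_Hset hh) (mul_mem_biUnion_orb J hh) r
    calc ∑ i, diffCount (![Xset, Yset, Zset, Wset] i) (h * r)
        = ∑ i, diffCount (![Xset, Yset, Zset, Wset] i) r :=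
          sum_congr rfl fun i _ => by fin_cases i <;> exact hinv _
      _ = 674 := (Fin.sum_univ_four _).trans (sum_diffCount_cosetRep r hr)
  · obtain ⟨r, hr, h, hh, rfl⟩ := exists_mul_cosetRep hc
    have hmem : ∀ a, h * a ∈ Xset ↔ a ∈ Xset :=
      mul_mem_iff_of_forall_mul_mem (isUnit_of_mem_Hset hh) (mul_mem_biUnion_orb Jset hh)
    rw [← mul_neg, hmem, hmem]
    exact skew_cosetRep r hr
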